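/- Let G be a minimal candidate, i.e., a graph with a bipartition (A,B), |A| ≥ |B| > 0, every vertex of A of degree at least six, no K_6 minor, and with |V(G)|+|E(G)| minimum among all such graphs. Then |A| = |B| and every vertex in A has degree exactly six. -/

import Mathlib

/-!
Both claims follow by exhibiting a smaller candidate. If `|A| > |B|`, delete a vertex of `A`:
its neighbours lie in `B`, so the degrees of the remaining vertices of `A` do not change. If some
`a ∈ A` has degree at least seven, delete an edge at `a`. Subgraphs of a graph with no `K_6` minor
have no `K_6` minor, so either way the result is a candidate with smaller `|V| + |E|`.
-/

open SimpleGraph Function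

/-- `G` has a `K_t` minor: there are `t` nonempty, pairwise disjoint "branch sets",
each inducing a connected subgraph, with an edge of `G` between any two of them.
(This is the "`t`-cluster" formulation, equivalent to `K_t` being obtainable from a
subgraph of `G` by contracting edges.) -/
def HasCliqueMinor {V : Type*} (G : SimpleGraph V) (t : ℕ) : Prop :=
  ∃ f : Fin t → Set V,
    (∀ i, (f i).Nonempty) ∧
    (∀ i, (G.induce (f i)).Connected) ∧
    (Pairwise fun i j => Disjoint (f i) (f j)) ∧
    ∀ i j, i ≠ j → ∃ u ∈ f i, ∃ v ∈ f j, G.Adj u v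

/-- `(A, B)` is a bipartition of `G`: the parts partition the vertex set and
every edge joins `A` to `B`. -/
def IsBipartitionWith {V : Type*} (G : SimpleGraph V) (A B : Set V) : Prop :=
  (∀ v, v ∈ A ∨ v ∈ B) ∧ (∀ v, ¬(v ∈ A ∧ v ∈ B)) ∧
    ∀ ⦃u v⦄, G.Adj u v → (u ∈ A ↔ v ∈ B)

/-- A candidate: a graph with a bipartition `(A,B)`, `|A| ≥ |B| > 0`, every vertex
of `A` of degree at least six, and no `K_6` minor. -/
def IsCandidate {V : Type*} (G : SimpleGraph V) (A B : Set V) : Prop :=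
  IsBipartitionWith G A B ∧ B.ncard ≤ A.ncard ∧ B.Nonempty ∧
    (∀ a ∈ A, 6 ≤ (G.neighborSet a).ncard) ∧ ¬ HasCliqueMinor G 6

/-- A minimal candidate: a candidate minimizing `|V(G)| + |E(G)|` among all
(finite) candidates. -/
def IsMinimalCandidate {V : Type*} [Fintype V] (G : SimpleGraph V) (A B : Set V) : Prop :=
  IsCandidate G A B ∧
    ∀ (n : ℕ) (G' : SimpleGraph (Fin n)) (A' B' : Set (Fin n)),
      IsCandidate G' A' B' →
        Fintype.card V + G.edgeSet.ncard ≤ n + G'.edgeSet.ncard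

namespace SimpleGraph

variable {V W : Type*}

lemma Iso.ncard_edgeSet_eq {G : SimpleGraph V} {H : SimpleGraph W} (φ : G ≃g H) :
    G.edgeSet.ncard = H.edgeSet.ncard := by
  rw [← Nat.card_coe_set_eq, ← Nat.card_coe_set_eq]
  exact Nat.card_congr φ.mapEdgeSet

lemma ncard_edgeSet_induce_le [Finite V] (G : SimpleGraph V) (s : Set V) :
    (G.induce s).edgeSet.ncard ≤ G.edgeSet.ncard := by
  rw [← Nat.card_coe_set_eq, ← Nat.card_coe_set_eq]
  exact Nat.card_le_card_of_injective _ (Embedding.induce s).mapEdgeSet.injective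

lemma ncard_edgeSet_deleteEdges_singleton {G : SimpleGraph V} {e : Sym2 V}
    (he : e ∈ G.edgeSet) : (G.deleteEdges {e}).edgeSet.ncard = G.edgeSet.ncard - 1 := by
  rw [edgeSet_deleteEdges, Set.ncard_sdiff_singleton_of_mem he]

lemma neighborSet_deleteEdges_singleton_of_ne (G : SimpleGraph V) {a b v : V}
    (hva : v ≠ a) (hvb : v ≠ b) :
    (G.deleteEdges {s(a, b)}).neighborSet v = G.neighborSet v := by
  ext w
  simp [hva, hvb]

lemma neighborSet_deleteEdges_singleton_left (G : SimpleGraph V) {a b : V} :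
    (G.deleteEdges {s(a, b)}).neighborSet a = G.neighborSet a \ {b} := by
  ext w
  rcases eq_or_ne w a with rfl | hwa
  · simp
  · simp [hwa, and_comm]

end SimpleGraph

lemma HasCliqueMinor.map {V W : Type*} {G : SimpleGraph V} {H : SimpleGraph W} {t : ℕ}
    (f : G →g H) (hf : Injective f) (hG : HasCliqueMinor G t) : HasCliqueMinor H t := by
  obtain ⟨S, hne, hconn, hdisj, hadj⟩ := hG
  refine ⟨fun i => f '' S i, fun i => (hne i).image f, fun i => ?_,
    fun i j hij => (Set.disjoint_image_iff hf).mpr (hdisj hij), fun i j hij => ?_⟩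
  · exact (hconn i).map (induceHom f (Set.mapsTo_image f (S i)))
      (Set.surjective_mapsTo_image_restrict f (S i))
  · obtain ⟨u, hu, v, hv, huv⟩ := hadj i j hij
    exact ⟨f u, Set.mem_image_of_mem f hu, f v, Set.mem_image_of_mem f hv, f.map_adj huv⟩

namespace IsCandidate

variable {V W : Type*} {G : SimpleGraph V} {A B : Set V}

lemma comap {H : SimpleGraph W} (φ : H ≃g G) (h : IsCandidate G A B) :
    IsCandidate H (φ ⁻¹' A) (φ ⁻¹' B) := by
  obtain ⟨⟨hcover, hdisj, hcross⟩, hcard, ⟨b, hb⟩, hdeg, hminor⟩ := h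
  have hpre (s : Set V) : (φ ⁻¹' s).ncard = s.ncard :=
    Set.ncard_preimage_of_injective_subset_range φ.injective
      (φ.surjective.range_eq ▸ Set.subset_univ s)
  have hnbr (w : W) : H.neighborSet w = φ ⁻¹' G.neighborSet (φ w) := by
    ext x
    exact φ.map_adj_iff.symm
  refine ⟨⟨fun w => hcover (φ w), fun w => hdisj (φ w),
    fun u v huv => hcross (φ.map_adj_iff.mpr huv)⟩, by rwa [hpre, hpre],
    ⟨φ.symm b, by simpa using hb⟩, fun w hw => ?_, fun hm => hminor ?_⟩
  · rw [hnbr, hpre]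
    exact hdeg _ hw
  · exact hm.map φ.toHom φ.injective

lemma induce_compl_singleton {a : V} (h : IsCandidate G A B) (ha : a ∈ A)
    (hlt : B.ncard < A.ncard) :
    IsCandidate (G.induce {a}ᶜ) (Subtype.val ⁻¹' A) (Subtype.val ⁻¹' B) := by
  obtain ⟨⟨hcover, hdisj, hcross⟩, -, ⟨b, hb⟩, hdeg, hminor⟩ := h
  have haB : a ∉ B := fun haB => hdisj a ⟨ha, haB⟩
  have hpre (s : Set V) :
      (Subtype.val ⁻¹' s : Set ({a}ᶜ : Set V)).ncard = (s \ {a}).ncard := by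
    rw [← Set.ncard_image_of_injective _ Subtype.val_injective, Subtype.image_preimage_coe,
      Set.sdiff_eq_compl_inter]
  refine ⟨⟨fun v => hcover v, fun v => hdisj v, fun u v huv => hcross huv⟩, ?_,
    ⟨⟨b, ?_⟩, hb⟩, fun v hv => ?_, fun hm => hminor ?_⟩
  · rw [hpre, hpre, Set.ncard_sdiff_singleton_of_mem ha, Set.sdiff_singleton_eq_self haB]
    omega
  · rintro rfl
    exact haB hb
  · have hsub : G.neighborSet v ⊆ Set.range ((↑) : ({a}ᶜ : Set V) → V) := by
      rw [Subtype.range_coe]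
      rintro w hw rfl
      exact haB ((hcross hw).mp hv)
    rw [show (G.induce {a}ᶜ).neighborSet v = Subtype.val ⁻¹' G.neighborSet v from rfl,
      Set.ncard_preimage_of_injective_subset_range Subtype.val_injective hsub]
    exact hdeg v hv
  · exact hm.map (Embedding.induce _).toHom Subtype.val_injective

lemma deleteEdges_singleton {a b : V} (h : IsCandidate G A B) (ha : a ∈ A) (hb : b ∈ B)
    (hdeg : 6 < (G.neighborSet a).ncard) : IsCandidate (G.deleteEdges {s(a, b)}) A B := by
  obtain ⟨⟨hcover, hdisj, hcross⟩, hcard, hB, hdegA, hminor⟩ := h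
  refine ⟨⟨hcover, hdisj, fun u v huv => hcross (deleteEdges_adj.mp huv).1⟩, hcard, hB,
    fun v hv => ?_, fun hm => hminor (hm.map (Hom.ofLE (deleteEdges_le _)) injective_id)⟩
  have hvb : v ≠ b := by
    rintro rfl
    exact hdisj v ⟨hv, hb⟩
  rcases eq_or_ne v a with rfl | hva
  · rw [neighborSet_deleteEdges_singleton_left]
    have := Set.pred_ncard_le_ncard_sdiff_singleton (G.neighborSet v) b
    omega
  · rw [neighborSet_deleteEdges_singleton_of_ne G hva hvb]
    exact hdegA v hv

end IsCandidate

namespace IsMinimalCandidate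

variable {V : Type*} [Fintype V] {G : SimpleGraph V} {A B : Set V}

lemma card_add_ncard_edgeSet_le {W : Type*} [Finite W] {H : SimpleGraph W} {A' B' : Set W}
    (hG : IsMinimalCandidate G A B) (hH : IsCandidate H A' B') :
    Fintype.card V + G.edgeSet.ncard ≤ Nat.card W + H.edgeSet.ncard := by
  have := Fintype.ofFinite W
  rw [Nat.card_eq_fintype_card]
  let φ := Iso.comap (Fintype.equivFin W).symm H
  simpa [φ.ncard_edgeSet_eq] using hG.2 _ _ _ _ (hH.comap φ)

lemma ncard_eq (hG : IsMinimalCandidate G A B) : A.ncard = B.ncard := by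
  obtain ⟨-, hBA, -⟩ := hG.1
  by_contra hne
  have hlt : B.ncard < A.ncard := hBA.lt_of_ne' hne
  obtain ⟨a, ha⟩ : A.Nonempty := Set.nonempty_of_ncard_ne_zero (by omega)
  have hle := hG.card_add_ncard_edgeSet_le (hG.1.induce_compl_singleton ha hlt)
  have hcard : 1 + Nat.card ({a}ᶜ : Set V) = Fintype.card V := by
    rw [Nat.card_coe_set_eq, ← Set.ncard_singleton a, Set.ncard_add_ncard_compl,
      Nat.card_eq_fintype_card]
  have := G.ncard_edgeSet_induce_le {a}ᶜ
  omega

lemma ncard_neighborSet_eq (hG : IsMinimalCandidate G A B) {a : V} (ha : a ∈ A) :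
    (G.neighborSet a).ncard = 6 := by
  obtain ⟨⟨-, -, hcross⟩, -, -, hdeg, -⟩ := hG.1
  refine (hdeg a ha).antisymm' ?_
  by_contra! hgt
  obtain ⟨b, hab⟩ : (G.neighborSet a).Nonempty := Set.nonempty_of_ncard_ne_zero (by omega)
  have hb : b ∈ B := (hcross hab).mp ha
  have hle := hG.card_add_ncard_edgeSet_le (hG.1.deleteEdges_singleton ha hb hgt)
  rw [Nat.card_eq_fintype_card, ncard_edgeSet_deleteEdges_singleton hab] at hle
  have : 0 < G.edgeSet.ncard := (Set.ncard_pos G.edgeSet.toFinite).mpr ⟨s(a, b), hab⟩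
  omega

end IsMinimalCandidate

/-- In a minimal candidate, `|A| = |B|` and every vertex of `A` has degree exactly six. -/
theorem minimalCandidate_card_and_degree {V : Type} [Fintype V] (G : SimpleGraph V)
    (A B : Set V) (hmin : IsMinimalCandidate G A B) :
    A.ncard = B.ncard ∧ ∀ a ∈ A, (G.neighborSet a).ncard = 6 :=
  ⟨hmin.ncard_eq, fun _ => hmin.ncard_neighborSet_eq⟩
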